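/- arXiv:1401.5642 — 4 statements merged into one kernel-verified Lean document; each statement's English description precedes it below -/
import Mathlib

section
/- Let f be a monic polynomial of degree n minimizing I[f] = ∫_E |f(x)| dx over monic polynomials of degree n, where E = [-1,α] ∪ [β,1]. If f factors as f(x) = (x-ξ)(x-η)φ(x) with α < ξ ≤ η < β (two zeros, counted with multiplicity, in the open gap (α,β)), then f is not a minimizer; i.e., there exists a monic polynomial f₁ of degree n with I[f₁] < I[f]. -/
open MeasureTheory Polynomial Set

/-!
With `q(x) = (x - ξ)(x - η)` and `h = min (q α) (q β) > 0`, the quadratic `q` is at least `h` on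
`E`, because `ξ, η` lie in the gap. Hence the competitor `f₁ = (q - h) φ`, which is again monic
of degree `n`, satisfies `|f₁| = |f| - h |φ|` pointwise on `E`, so that
`I[f₁] = I[f] - h ∫_E |φ| < I[f]`.
-/

lemma Polynomial.IsMonicOfDegree.sub_C_mul {R : Type*} [Ring R] {p q : R[X]} {m n : ℕ}
    (hp : IsMonicOfDegree p m) (hm : m ≠ 0) (hpq : IsMonicOfDegree (p * q) n) (c : R) :
    IsMonicOfDegree ((p - C c) * q) n := by
  have hq : IsMonicOfDegree q q.natDegree := ⟨rfl, hp.monic.of_mul_monic_left hpq.monic⟩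
  rw [← hpq.natDegree_eq, (hp.mul hq).natDegree_eq]
  exact (hp.sub (by rwa [natDegree_C, Nat.pos_iff_ne_zero])).mul hq

section QuadraticOutsideRoots

variable {R : Type*} [CommRing R] [LinearOrder R] [IsStrictOrderedRing R] {x y ξ η : R}

lemma sub_mul_sub_le_sub_mul_sub_of_le_left (hxy : x ≤ y) (hξ : y ≤ ξ) (hη : y ≤ η) :
    (y - ξ) * (y - η) ≤ (x - ξ) * (x - η) :=
  mul_le_mul_of_nonpos_of_nonpos (by linarith) (by linarith) (by linarith) (by linarith)

lemma sub_mul_sub_le_sub_mul_sub_of_le_right (hyx : y ≤ x) (hξ : ξ ≤ y) (hη : η ≤ y) :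
    (y - ξ) * (y - η) ≤ (x - ξ) * (x - η) :=
  mul_le_mul (by linarith) (by linarith) (by linarith) (by linarith)

end QuadraticOutsideRoots

lemma intervalIntegral_abs_sub_mul {q g : ℝ → ℝ} {a b c : ℝ} (hc : 0 ≤ c)
    (hcq : ∀ x ∈ uIcc a b, c ≤ q x)
    (hqg : IntervalIntegrable (fun x => |q x * g x|) volume a b)
    (hg : IntervalIntegrable g volume a b) :
    ∫ x in a..b, |(q x - c) * g x| = (∫ x in a..b, |q x * g x|) - c * ∫ x in a..b, |g x| := by
  have hpointwise :
      EqOn (fun x => |(q x - c) * g x|) (fun x => |q x * g x| - c * |g x|) (uIcc a b) := by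
    intro x hx
    have hcx := hcq x hx
    simp only [abs_mul, abs_of_nonneg (sub_nonneg.2 hcx), abs_of_nonneg (hc.trans hcx)]
    ring
  rw [intervalIntegral.integral_congr hpointwise,
    intervalIntegral.integral_sub hqg (hg.abs.const_mul c), intervalIntegral.integral_const_mul]

lemma Polynomial.intervalIntegral_abs_eval_pos {p : ℝ[X]} (hp : p ≠ 0) {a b : ℝ} (hab : a < b) :
    0 < ∫ x in a..b, |p.eval x| := by
  refine (intervalIntegral.integral_pos_iff_support_of_nonneg_ae
    (ae_of_all _ fun x => abs_nonneg _) (p.continuous.abs.intervalIntegrable a b)).2 ⟨hab, ?_⟩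
  have hroots : {x : ℝ | p.IsRoot x}.Finite := finite_setOfPred_isRoot hp
  have hsub : Ioc a b \ {x | p.IsRoot x} ⊆ Function.support (fun x => |p.eval x|) ∩ Ioc a b :=
    fun x ⟨hx, hroot⟩ => ⟨abs_ne_zero.2 hroot, hx⟩
  calc (0 : ENNReal) < volume (Ioc a b) := by simpa using hab
    _ = volume (Ioc a b \ {x | p.IsRoot x}) := (measure_sdiff_null (hroots.measure_zero _)).symm
    _ ≤ _ := measure_mono hsub

theorem akhiezer_two_gap_zeros_not_minimal_general
    (α β : ℝ) (hα : -1 < α) (hβ : β < 1) (n : ℕ)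
    (f φ : Polynomial ℝ) (ξ η : ℝ)
    (hf : f.Monic) (hdeg : f.natDegree = n)
    (hfact : f = (X - C ξ) * (X - C η) * φ)
    (hξ : α < ξ) (hξη : ξ ≤ η) (hη : η < β) :
    ∃ f₁ : Polynomial ℝ, f₁.Monic ∧ f₁.natDegree = n ∧
      (∫ x in (-1:ℝ)..α, |f₁.eval x|) + (∫ x in β..(1:ℝ), |f₁.eval x|) <
      (∫ x in (-1:ℝ)..α, |f.eval x|) + (∫ x in β..(1:ℝ), |f.eval x|) := by
  have hφ : φ ≠ 0 := by rintro rfl; exact hf.ne_zero (by rw [hfact, mul_zero])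
  set h := min ((α - ξ) * (α - η)) ((β - ξ) * (β - η))
  have hh : 0 < h := lt_min (mul_pos_of_neg_of_neg (by linarith) (by linarith))
    (mul_pos (by linarith) (by linarith))
  have hquad : IsMonicOfDegree ((X - C ξ) * (X - C η)) 2 :=
    (isMonicOfDegree_X_sub_one ξ).mul (isMonicOfDegree_X_sub_one η)
  obtain ⟨hdeg₁, hmonic₁⟩ :=
    hquad.sub_C_mul (q := φ) two_ne_zero (hfact ▸ ⟨hdeg, hf⟩ : IsMonicOfDegree _ n) h
  refine ⟨_, hmonic₁, hdeg₁, ?_⟩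
  have hcont : Continuous fun x => |(x - ξ) * (x - η) * φ.eval x| := by fun_prop
  have hleft := intervalIntegral_abs_sub_mul (a := -1) (b := α) (q := fun x => (x - ξ) * (x - η))
    hh.le (fun x hx => (min_le_left _ _).trans (sub_mul_sub_le_sub_mul_sub_of_le_left
      (uIcc_of_le hα.le ▸ hx).2 hξ.le (by linarith)))
    (hcont.intervalIntegrable _ _) (φ.continuous.intervalIntegrable _ _)
  have hright := intervalIntegral_abs_sub_mul (a := β) (b := 1) (q := fun x => (x - ξ) * (x - η))
    hh.le (fun x hx => (min_le_right _ _).trans (sub_mul_sub_le_sub_mul_sub_of_le_right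
      (uIcc_of_le hβ.le ▸ hx).1 (by linarith) hη.le))
    (hcont.intervalIntegrable _ _) (φ.continuous.intervalIntegrable _ _)
  subst hfact
  simp only [eval_mul, eval_sub, eval_X, eval_C] at hleft hright ⊢
  rw [hleft, hright]
  have hpos := intervalIntegral_abs_eval_pos hφ hα
  have hnonneg : 0 ≤ ∫ x in β..(1:ℝ), |φ.eval x| :=
    intervalIntegral.integral_nonneg hβ.le fun x _ => abs_nonneg _
  linarith [mul_pos hh hpos, mul_nonneg hh.le hnonneg]

/-- A minimizer of `I` cannot have two zeros (with multiplicity) in the gap `(α,β)`: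
if `f = (x-ξ)(x-η)φ` with `α < ξ ≤ η < β`, there is a monic polynomial of the same
degree with strictly smaller `I`. -/
theorem akhiezer_two_gap_zeros_not_minimal
    (α β : ℝ) (hα : -1 < α) (hαβ : α < β) (hβ : β < 1) (n : ℕ)
    (f φ : Polynomial ℝ) (ξ η : ℝ)
    (hf : f.Monic) (hdeg : f.natDegree = n)
    (hfact : f = (X - C ξ) * (X - C η) * φ)
    (hξ : α < ξ) (hξη : ξ ≤ η) (hη : η < β) :
    ∃ f₁ : Polynomial ℝ, f₁.Monic ∧ f₁.natDegree = n ∧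
      (∫ x in (-1:ℝ)..α, |f₁.eval x|) + (∫ x in β..(1:ℝ), |f₁.eval x|) <
      (∫ x in (-1:ℝ)..α, |f.eval x|) + (∫ x in β..(1:ℝ), |f.eval x|) :=
  akhiezer_two_gap_zeros_not_minimal_general α β hα hβ n f φ ξ η hf hdeg hfact hξ hξη hη
end

section
/- Let f be monic of degree n with all zeros simple and contained in [-1,1], minimizing I[f] = ∫_E |f| over monic polynomials of degree n, where E = [-1,α] ∪ [β,1]. Then f has at most one zero in the open interval (α, β). -/
/-!
If the minimizer `f` had two zeros `ξ ≠ η` in the gap, write `f = q φ` with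
`q = (X - ξ)(X - η)`. On `E` the quadratic `q` stays above some `h > 0`, so replacing `q` by
`q - h` keeps the polynomial monic of degree `n` while shrinking `|f|` pointwise on `E`, strictly
wherever `φ ≠ 0`; this lowers `∫_E |f|`.
-/

open MeasureTheory Polynomial Set

namespace Polynomial

variable {R : Type*} [CommRing R]

theorem Monic.sub_C {q : R[X]} (hq : q.Monic) (hdeg : 0 < q.natDegree) (c : R) :
    (q - C c).Monic :=
  hq.sub_of_left (degree_C_le.trans_lt (natDegree_pos_iff_degree_pos.mp hdeg))

theorem Monic.exists_eq_X_sub_C_mul_X_sub_C_mul [IsDomain R] {f : R[X]} (hf : f.Monic)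
    {ξ η : R} (hne : ξ ≠ η) (hξ : f.IsRoot ξ) (hη : f.IsRoot η) :
    ∃ φ : R[X], φ.Monic ∧ f = (X - C ξ) * (X - C η) * φ := by
  set p := f /ₘ (X - C ξ)
  have hfp : (X - C ξ) * p = f := mul_divByMonic_eq_iff_isRoot.mpr hξ
  have hpη : p.IsRoot η := by
    rw [← hfp, IsRoot, eval_mul, eval_sub, eval_X, eval_C] at hη
    exact (mul_eq_zero.mp hη).resolve_left (sub_ne_zero.mpr hne.symm)
  have hpφ : (X - C η) * (p /ₘ (X - C η)) = p := mul_divByMonic_eq_iff_isRoot.mpr hpη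
  have hf' : f = (X - C ξ) * (X - C η) * (p /ₘ (X - C η)) := by
    rw [mul_assoc, hpφ, hfp]
  exact ⟨_, ((monic_X_sub_C ξ).mul (monic_X_sub_C η)).of_mul_monic_left (hf' ▸ hf), hf'⟩

theorem exists_mem_Icc_eval_ne_zero {φ : ℝ[X]} (hφ : φ ≠ 0) {a b : ℝ} (hab : a < b) :
    ∃ x ∈ Icc a b, φ.eval x ≠ 0 := by
  by_contra! h
  exact hφ (φ.eq_zero_of_infinite_isRoot ((Icc_infinite hab).mono h))

theorem abs_eval_sub_C_mul_le {q φ : ℝ[X]} {h x : ℝ} (hh : 0 ≤ h) (hx : h ≤ q.eval x) :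
    |((q - C h) * φ).eval x| ≤ |(q * φ).eval x| := by
  simp only [eval_mul, eval_sub, eval_C, abs_mul]
  rw [abs_of_nonneg (sub_nonneg.mpr hx), abs_of_nonneg (hh.trans hx)]
  exact mul_le_mul_of_nonneg_right (by linarith) (abs_nonneg _)

theorem abs_eval_sub_C_mul_lt {q φ : ℝ[X]} {h x : ℝ} (hh : 0 < h) (hx : h ≤ q.eval x)
    (hφx : φ.eval x ≠ 0) : |((q - C h) * φ).eval x| < |(q * φ).eval x| := by
  simp only [eval_mul, eval_sub, eval_C, abs_mul]
  rw [abs_of_nonneg (sub_nonneg.mpr hx), abs_of_nonneg (hh.le.trans hx)]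
  exact mul_lt_mul_of_pos_right (by linarith) (abs_pos.mpr hφx)

theorem integral_abs_eval_sub_C_mul_le {q φ : ℝ[X]} {h a b : ℝ} (hab : a ≤ b) (hh : 0 ≤ h)
    (hq : ∀ x ∈ Icc a b, h ≤ q.eval x) :
    ∫ x in a..b, |((q - C h) * φ).eval x| ≤ ∫ x in a..b, |(q * φ).eval x| :=
  intervalIntegral.integral_mono_on hab
    (((q - C h) * φ).continuous.abs.intervalIntegrable _ _)
    ((q * φ).continuous.abs.intervalIntegrable _ _)
    fun x hx => abs_eval_sub_C_mul_le hh (hq x hx)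

theorem integral_abs_eval_sub_C_mul_lt {q φ : ℝ[X]} {h a b : ℝ} (hab : a < b) (hh : 0 < h)
    (hφ : φ ≠ 0) (hq : ∀ x ∈ Icc a b, h ≤ q.eval x) :
    ∫ x in a..b, |((q - C h) * φ).eval x| < ∫ x in a..b, |(q * φ).eval x| := by
  obtain ⟨c, hc, hφc⟩ := exists_mem_Icc_eval_ne_zero hφ hab
  exact intervalIntegral.integral_lt_integral_of_continuousOn_of_le_of_exists_lt hab
    (by fun_prop) (by fun_prop)
    (fun x hx => abs_eval_sub_C_mul_le hh.le (hq x (Ioc_subset_Icc_self hx)))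
    ⟨c, hc, abs_eval_sub_C_mul_lt hh (hq c hc) hφc⟩

end Polynomial

theorem exists_pos_le_mul_sub_sub_of_mem_Ioo {α β ξ η : ℝ} (hξ : ξ ∈ Ioo α β)
    (hη : η ∈ Ioo α β) : ∃ h > 0, ∀ x, x ≤ α ∨ β ≤ x → h ≤ (x - ξ) * (x - η) := by
  obtain ⟨hαξ, hξβ⟩ := hξ
  obtain ⟨hαη, hηβ⟩ := hη
  refine ⟨min ((ξ - α) * (η - α)) ((β - ξ) * (β - η)),
    lt_min (by nlinarith) (by nlinarith), fun x hx => ?_⟩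
  rcases hx with hx | hx
  · exact (min_le_left _ _).trans (by nlinarith)
  · exact (min_le_right _ _).trans (by nlinarith)

theorem akhiezer_at_most_one_gap_zero_general
    (α β : ℝ) (hα : -1 < α) (hβ : β < 1) (n : ℕ)
    (f : Polynomial ℝ) (hf : f.Monic) (hdeg : f.natDegree = n)
    (hmin : ∀ g : Polynomial ℝ, g.Monic → g.natDegree = n →
      (∫ x in (-1:ℝ)..α, |f.eval x|) + (∫ x in β..(1:ℝ), |f.eval x|) ≤
      (∫ x in (-1:ℝ)..α, |g.eval x|) + (∫ x in β..(1:ℝ), |g.eval x|)) :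
    ∀ ξ η : ℝ, f.eval ξ = 0 → f.eval η = 0 →
      ξ ∈ Set.Ioo α β → η ∈ Set.Ioo α β → ξ = η := by
  intro ξ η hfξ hfη hξ hη
  by_contra hne
  obtain ⟨φ, hφ, rfl⟩ := hf.exists_eq_X_sub_C_mul_X_sub_C_mul hne hfξ hfη
  set q := (X - C ξ) * (X - C η)
  have hq : q.Monic := (monic_X_sub_C ξ).mul (monic_X_sub_C η)
  have hq_deg : 0 < q.natDegree := by
    simp [q, natDegree_mul (X_sub_C_ne_zero ξ) (X_sub_C_ne_zero η)]
  obtain ⟨h, hh, hgap_bound⟩ := exists_pos_le_mul_sub_sub_of_mem_Ioo hξ hη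
  have hq_ge : ∀ x, x ≤ α ∨ β ≤ x → h ≤ q.eval x := fun x hx => by
    simpa [q] using hgap_bound x hx
  have hmin_g := hmin ((q - C h) * φ) ((hq.sub_C hq_deg h).mul hφ) (by
    rw [← hdeg, (hq.sub_C hq_deg h).natDegree_mul hφ, natDegree_sub_C, hq.natDegree_mul hφ])
  have hleft := integral_abs_eval_sub_C_mul_lt hα hh hφ.ne_zero fun x hx => hq_ge x (.inl hx.2)
  have hright := integral_abs_eval_sub_C_mul_le (φ := φ) hβ.le hh.le
    fun x hx => hq_ge x (.inr hx.1)
  linarith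

/-- A monic minimizer of `I[f] = ∫_E |f|` whose zeros are all simple and lie in
`[-1,1]` has at most one zero in the open gap `(α,β)`. -/
theorem akhiezer_at_most_one_gap_zero
    (α β : ℝ) (hα : -1 < α) (hαβ : α < β) (hβ : β < 1) (n : ℕ) (hn : 1 ≤ n)
    (f : Polynomial ℝ) (hf : f.Monic) (hdeg : f.natDegree = n)
    (hzeros : ∀ z : ℝ, f.eval z = 0 → z ∈ Set.Icc (-1:ℝ) 1)
    (hsimple : Squarefree f)
    (hmin : ∀ g : Polynomial ℝ, g.Monic → g.natDegree = n →
      (∫ x in (-1:ℝ)..α, |f.eval x|) + (∫ x in β..(1:ℝ), |f.eval x|) ≤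
      (∫ x in (-1:ℝ)..α, |g.eval x|) + (∫ x in β..(1:ℝ), |g.eval x|)) :
    ∀ ξ η : ℝ, f.eval ξ = 0 → f.eval η = 0 →
      ξ ∈ Set.Ioo α β → η ∈ Set.Ioo α β → ξ = η :=
  akhiezer_at_most_one_gap_zero_general α β hα hβ n f hf hdeg hmin
end

section
/- Let f be a minimizer of I[f] = ∫_E |f| over monic polynomials of degree n that has a zero ξ with α < ξ < β, so f(x) = (x−ξ)φ(x). Then ∫_{-1}^{α} |f(x)|/(ξ−x) dx = ∫_{β}^{1} |f(x)|/(x−ξ) dx. -/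
open MeasureTheory Polynomial

set_option maxHeartbeats 1000000

/-- If a monic minimizer of `I[f] = ∫_E |f|` has a zero `ξ ∈ (α,β)`, so
`f = (x−ξ)φ`, then `∫_{-1}^{α} |f(x)|/(ξ−x) dx = ∫_{β}^{1} |f(x)|/(x−ξ) dx`. -/
theorem akhiezer_gap_zero_balance
    (α β : ℝ) (hα : -1 < α) (hαβ : α < β) (hβ : β < 1) (n : ℕ) (hn : 1 ≤ n)
    (f φ : Polynomial ℝ) (ξ : ℝ)
    (hf : f.Monic) (hdeg : f.natDegree = n)
    (hξ : ξ ∈ Set.Ioo α β) (hfact : f = (X - C ξ) * φ)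
    (hmin : ∀ g : Polynomial ℝ, g.Monic → g.natDegree = n →
      (∫ x in (-1:ℝ)..α, |f.eval x|) + (∫ x in β..(1:ℝ), |f.eval x|) ≤
      (∫ x in (-1:ℝ)..α, |g.eval x|) + (∫ x in β..(1:ℝ), |g.eval x|)) :
    (∫ x in (-1:ℝ)..α, |f.eval x| / (ξ - x)) =
      (∫ x in β..(1:ℝ), |f.eval x| / (x - ξ)) := by
  obtain ⟨hξα, hξβ⟩ := hξ
  have hXm : (X - C ξ).Monic := monic_X_sub_C ξ
  have hmulm : ((X - C ξ) * φ).Monic := hfact ▸ hf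
  have hφm : φ.Monic := hXm.of_mul_monic_left hmulm
  have hφ0 : φ ≠ 0 := hφm.ne_zero
  have hφdeg : 1 + φ.natDegree = n := by
    have : f.natDegree = 1 + φ.natDegree := by
      rw [hfact, natDegree_mul (X_sub_C_ne_zero ξ) hφ0, natDegree_X_sub_C]
    omega
  have hcφ : Continuous fun x : ℝ => |φ.eval x| := (Polynomial.continuous φ).abs
  set A := ∫ x in (-1:ℝ)..α, |φ.eval x| with hA
  set B := ∫ x in β..(1:ℝ), |φ.eval x| with hB
  -- rewrite the goal's two sides
  have hgoalL : (∫ x in (-1:ℝ)..α, |f.eval x| / (ξ - x)) = A := by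
    apply intervalIntegral.integral_congr
    intro x hx
    rw [Set.uIcc_of_le (by linarith)] at hx
    have hxξ : x < ξ := lt_of_le_of_lt hx.2 hξα
    have hne : ξ - x ≠ 0 := by
      have : 0 < ξ - x := by linarith
      exact ne_of_gt this
    have hev : f.eval x = (x - ξ) * φ.eval x := by rw [hfact]; simp
    show |f.eval x| / (ξ - x) = |φ.eval x|
    rw [hev, abs_mul, abs_of_neg (by linarith : x - ξ < 0), neg_sub,
      mul_comm, mul_div_assoc, div_self hne, mul_one]
  have hgoalR : (∫ x in β..(1:ℝ), |f.eval x| / (x - ξ)) = B := by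
    apply intervalIntegral.integral_congr
    intro x hx
    rw [Set.uIcc_of_le (by linarith)] at hx
    have hxξ : ξ < x := lt_of_lt_of_le hξβ hx.1
    have hne : x - ξ ≠ 0 := by
      have : 0 < x - ξ := by linarith
      exact ne_of_gt this
    have hev : f.eval x = (x - ξ) * φ.eval x := by rw [hfact]; simp
    show |f.eval x| / (x - ξ) = |φ.eval x|
    rw [hev, abs_mul, abs_of_pos (by linarith : (0:ℝ) < x - ξ),
      mul_comm, mul_div_assoc, div_self hne, mul_one]
  -- |f| equals (ξ-x)|φ| on the left band, (x-ξ)|φ| on the right band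
  have hfL : (∫ x in (-1:ℝ)..α, |f.eval x|) = ∫ x in (-1:ℝ)..α, (ξ - x) * |φ.eval x| := by
    apply intervalIntegral.integral_congr
    intro x hx
    rw [Set.uIcc_of_le (by linarith)] at hx
    have hev : f.eval x = (x - ξ) * φ.eval x := by rw [hfact]; simp
    show |f.eval x| = (ξ - x) * |φ.eval x|
    rw [hev, abs_mul, abs_of_neg (by nlinarith [hx.2] : x - ξ < 0), neg_sub]
  have hfR : (∫ x in β..(1:ℝ), |f.eval x|) = ∫ x in β..(1:ℝ), (x - ξ) * |φ.eval x| := by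
    apply intervalIntegral.integral_congr
    intro x hx
    rw [Set.uIcc_of_le (by linarith)] at hx
    have hev : f.eval x = (x - ξ) * φ.eval x := by rw [hfact]; simp
    show |f.eval x| = (x - ξ) * |φ.eval x|
    rw [hev, abs_mul, abs_of_pos (by nlinarith [hx.1] : (0:ℝ) < x - ξ)]
  -- key: the objective for the perturbed root c is I[f] + (c-ξ)(A-B)
  have hkey : ∀ c : ℝ, α < c → c < β → 0 ≤ (c - ξ) * (A - B) := by
    intro c hc1 hc2
    set g := (X - C c) * φ with hg
    have hgm : g.Monic := (monic_X_sub_C c).mul hφm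
    have hgdeg : g.natDegree = n := by
      rw [hg, natDegree_mul (X_sub_C_ne_zero c) hφ0, natDegree_X_sub_C]
      omega
    have h := hmin g hgm hgdeg
    have hint1 : IntervalIntegrable (fun x : ℝ => (ξ - x) * |φ.eval x|) volume (-1) α :=
      (((continuous_const.sub continuous_id).mul hcφ).intervalIntegrable _ _)
    have hint2 : IntervalIntegrable (fun x : ℝ => (c - ξ) * |φ.eval x|) volume (-1) α :=
      (Continuous.mul continuous_const hcφ).intervalIntegrable _ _
    have hint3 : IntervalIntegrable (fun x : ℝ => (x - ξ) * |φ.eval x|) volume β 1 :=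
      (((continuous_id.sub continuous_const).mul hcφ).intervalIntegrable _ _)
    have hint4 : IntervalIntegrable (fun x : ℝ => (ξ - c) * |φ.eval x|) volume β 1 :=
      (Continuous.mul continuous_const hcφ).intervalIntegrable _ _
    have hgL : (∫ x in (-1:ℝ)..α, |g.eval x|)
        = (∫ x in (-1:ℝ)..α, (ξ - x) * |φ.eval x|) + (c - ξ) * A := by
      have h1 : (∫ x in (-1:ℝ)..α, |g.eval x|)
          = ∫ x in (-1:ℝ)..α, ((ξ - x) * |φ.eval x| + (c - ξ) * |φ.eval x|) := by
        apply intervalIntegral.integral_congr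
        intro x hx
        rw [Set.uIcc_of_le (by linarith)] at hx
        have hev : g.eval x = (x - c) * φ.eval x := by rw [hg]; simp
        show |g.eval x| = (ξ - x) * |φ.eval x| + (c - ξ) * |φ.eval x|
        rw [hev, abs_mul, abs_of_neg (by nlinarith [hx.2] : x - c < 0)]
        ring
      rw [h1, intervalIntegral.integral_add hint1 hint2,
        intervalIntegral.integral_const_mul]
    have hgR : (∫ x in β..(1:ℝ), |g.eval x|)
        = (∫ x in β..(1:ℝ), (x - ξ) * |φ.eval x|) + (ξ - c) * B := by
      have h1 : (∫ x in β..(1:ℝ), |g.eval x|)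
          = ∫ x in β..(1:ℝ), ((x - ξ) * |φ.eval x| + (ξ - c) * |φ.eval x|) := by
        apply intervalIntegral.integral_congr
        intro x hx
        rw [Set.uIcc_of_le (by linarith)] at hx
        have hev : g.eval x = (x - c) * φ.eval x := by rw [hg]; simp
        show |g.eval x| = (x - ξ) * |φ.eval x| + (ξ - c) * |φ.eval x|
        rw [hev, abs_mul, abs_of_pos (by nlinarith [hx.1] : (0:ℝ) < x - c)]
        ring
      rw [h1, intervalIntegral.integral_add hint3 hint4,
        intervalIntegral.integral_const_mul]
    rw [hgL, hgR, hfL, hfR] at h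
    nlinarith [h]
  have h1 := hkey ((α + ξ) / 2) (by linarith) (by linarith)
  have h2 := hkey ((ξ + β) / 2) (by linarith) (by linarith)
  rw [hgoalL, hgoalR]
  nlinarith [h1, h2]
end

section
/- For n ≥ 1, the minimum of ∫_{-1}^{1} |P(x)| dx over monic polynomials P of degree n equals 4·2^{-n-1} = 2^{1-n}, and it is attained at P(x) = 2^{-n}·U_n(x), where U_n is the Chebyshev polynomial of the second kind, U_n(cos θ) = sin((n+1)θ)/sin θ. -/
open MeasureTheory Polynomial Real Finset

lemma KZ.measurable_sign : Measurable Real.sign := by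
  unfold Real.sign
  refine Measurable.ite (measurableSet_lt measurable_id measurable_const) measurable_const ?_
  exact Measurable.ite (measurableSet_lt measurable_const measurable_id) measurable_const
    measurable_const

lemma KZ.abs_sign_le (y : ℝ) : |Real.sign y| ≤ 1 := by
  rcases Real.sign_apply_eq y with h | h | h <;> simp [h]

noncomputable def KZ.s (n : ℕ) (x : ℝ) : ℝ :=
  Real.sign ((Polynomial.Chebyshev.U ℝ n).eval x)

lemma KZ.integrable_mul_s (n : ℕ) (P : Polynomial ℝ) (a b : ℝ) :
    IntervalIntegrable (fun x => P.eval x * KZ.s n x) volume a b := by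
  have hc : IntervalIntegrable (fun x => |P.eval x|) volume a b :=
    (P.continuous_aeval.abs.intervalIntegrable a b)
  refine hc.mono_fun ?_ ?_
  · exact ((P.continuous_aeval.measurable.mul
      (KZ.measurable_sign.comp (Polynomial.Chebyshev.U ℝ n).continuous_aeval.measurable)).aestronglyMeasurable)
  · filter_upwards with x
    simp only [norm_eq_abs, abs_abs, abs_mul]
    calc |P.eval x| * |KZ.s n x| ≤ |P.eval x| * 1 :=
      mul_le_mul_of_nonneg_left (KZ.abs_sign_le _) (abs_nonneg _)
    _ = |P.eval x| := mul_one _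

lemma KZ.U_deg (k : ℕ) : (Polynomial.Chebyshev.U ℝ k).natDegree = k ∧
    (Polynomial.Chebyshev.U ℝ k).coeff k = 2 ^ k := by
  induction k using Nat.strong_induction_on with
  | _ k ih =>
    match k with
    | 0 => simp
    | 1 =>
      constructor
      · simpa using natDegree_C_mul_X (2:ℝ) two_ne_zero
      · simp [Polynomial.Chebyshev.U_one, coeff_X]
    | (k+2) =>
      obtain ⟨h1d, h1c⟩ := ih (k+1) (by omega)
      obtain ⟨h0d, h0c⟩ := ih k (by omega)
      have hrec : Polynomial.Chebyshev.U ℝ (k+2 : ℕ) =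
          2 * X * Polynomial.Chebyshev.U ℝ (k+1 : ℕ) - Polynomial.Chebyshev.U ℝ (k : ℕ) := by
        have := Polynomial.Chebyshev.U_add_two ℝ (k : ℤ)
        push_cast at this ⊢
        convert this using 2 <;> push_cast <;> ring
      have h2 : (2 * X * Polynomial.Chebyshev.U ℝ (k+1 : ℕ)).natDegree ≤ k + 2 := by
        refine le_trans (natDegree_mul_le) ?_
        have : (2 * X : Polynomial ℝ).natDegree ≤ 1 := by
          refine le_trans natDegree_mul_le ?_
          simp
        omega
      have hdle : (Polynomial.Chebyshev.U ℝ (k+2 : ℕ)).natDegree ≤ k + 2 := by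
        rw [hrec]
        refine le_trans (natDegree_sub_le _ _) ?_
        simp only [max_le_iff]
        exact ⟨h2, by omega⟩
      have hco : (Polynomial.Chebyshev.U ℝ (k+2 : ℕ)).coeff (k+2) = 2 ^ (k+2) := by
        rw [hrec]
        rw [coeff_sub]
        have : (2 * X * Polynomial.Chebyshev.U ℝ (k+1 : ℕ)) =
            Polynomial.C 2 * (X * Polynomial.Chebyshev.U ℝ (k+1 : ℕ)) := by
          rw [← mul_assoc, map_ofNat]
        rw [this, coeff_C_mul, coeff_X_mul, h1c,
          coeff_eq_zero_of_natDegree_lt (by omega)]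
        ring
      refine ⟨natDegree_eq_of_le_of_coeff_ne_zero hdle (by rw [hco]; positivity), hco⟩


noncomputable def KZ.a (n j : ℕ) : ℝ :=
  Real.cos ((n + 1 - j : ℝ) * π / (n + 1))

lemma KZ.sign_on_piece (n j : ℕ) (hj : j < n + 1) {x : ℝ}
    (hx : x ∈ Set.Ioo (KZ.a n j) (KZ.a n (j + 1))) :
    KZ.s n x = (-1 : ℝ) ^ (n - j) := by
  have hN : (0:ℝ) < n + 1 := by positivity
  have hj' : (j:ℝ) ≤ n := by exact_mod_cast Nat.lt_succ_iff.mp hj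
  have hx1 : -1 ≤ x := (Real.neg_one_le_cos _).trans hx.1.le
  have hx2 : x ≤ 1 := hx.2.le.trans (Real.cos_le_one _)
  set θ := Real.arccos x with hθ
  have hθcos : Real.cos θ = x := Real.cos_arccos hx1 hx2
  have hθmem : θ ∈ Set.Icc 0 π := ⟨Real.arccos_nonneg x, Real.arccos_le_pi x⟩
  have hmem1 : ((n + 1 - j : ℝ) * π / (n + 1)) ∈ Set.Icc 0 π := by
    constructor
    · have : (0:ℝ) ≤ n + 1 - j := by linarith
      positivity
    · rw [div_le_iff₀ hN]
      have := Real.pi_pos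
      nlinarith
  have hmem2 : ((n + 1 - (j+1) : ℝ) * π / (n + 1)) ∈ Set.Icc 0 π := by
    constructor
    · have : (0:ℝ) ≤ n + 1 - (j+1) := by linarith
      positivity
    · rw [div_le_iff₀ hN]
      have := Real.pi_pos
      nlinarith
  have hup : θ < (n + 1 - j : ℝ) * π / (n + 1) := by
    have := hx.1
    rw [KZ.a, ← hθcos] at this
    exact (Real.strictAntiOn_cos.lt_iff_gt hmem1 hθmem).mp this
  have hlo : (n + 1 - (j+1) : ℝ) * π / (n + 1) < θ := by
    have := hx.2
    rw [KZ.a, ← hθcos] at this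
    have h' : ((n:ℝ) + 1 - (↑(j+1))) * π / (n + 1) = (n + 1 - (j+1) : ℝ) * π / (n+1) := by
      push_cast; ring
    rw [h'] at this
    exact (Real.strictAntiOn_cos.lt_iff_gt hθmem hmem2).mp this
  have hθ0 : 0 < θ := lt_of_le_of_lt hmem2.1 hlo
  have hθπ : θ < π := lt_of_lt_of_le hup hmem1.2
  have hsinθ : 0 < Real.sin θ := Real.sin_pos_of_pos_of_lt_pi hθ0 hθπ
  have key : (Polynomial.Chebyshev.U ℝ n).eval x * Real.sin θ
      = Real.sin ((n + 1 : ℝ) * θ) := by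
    have := Polynomial.Chebyshev.U_real_cos θ n
    rw [hθcos] at this
    rw [this]
    norm_num
  set k := n - j with hkdef
  have hk : (k : ℝ) = n - j := by
    rw [hkdef]; push_cast [Nat.cast_sub (Nat.lt_succ_iff.mp hj)]; ring
  have hsplit : Real.sin ((n + 1 : ℝ) * θ) = (-1 : ℝ) ^ k * Real.sin ((n+1) * θ - k * π) := by
    have := Real.sin_add_int_mul_pi ((n + 1 : ℝ) * θ - k * π) k
    push_cast at this
    rw [sub_add_cancel, zpow_natCast] at this
    exact this
  have hpos : 0 < Real.sin ((n + 1 : ℝ) * θ - k * π) := by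
    apply Real.sin_pos_of_pos_of_lt_pi
    · have : (k : ℝ) * π < (n + 1 : ℝ) * θ := by
        have h1 : (k:ℝ) * π / (n+1) < θ := by rw [hk]; convert hlo using 2; ring
        calc (k:ℝ) * π = ((k:ℝ) * π / (n+1)) * (n+1) := by field_simp
        _ < θ * (n+1) := by exact mul_lt_mul_of_pos_right h1 hN
        _ = (n+1) * θ := by ring
      linarith
    · have : (n + 1 : ℝ) * θ < (k + 1) * π := by
        have h1 : θ < ((k:ℝ)+1) * π / (n+1) := by rw [hk]; convert hup using 2; ring
        calc (n+1:ℝ) * θ = θ * (n+1) := by ring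
        _ < (((k:ℝ)+1) * π / (n+1)) * (n+1) := mul_lt_mul_of_pos_right h1 hN
        _ = ((k:ℝ)+1) * π := by field_simp
      linarith
  have heval : (Polynomial.Chebyshev.U ℝ n).eval x
      = (-1:ℝ)^k * Real.sin ((n+1)*θ - k*π) / Real.sin θ := by
    field_simp at key ⊢
    rw [key, hsplit]
  rcases Nat.even_or_odd k with hek | hok
  · have : 0 < (Polynomial.Chebyshev.U ℝ n).eval x := by
      rw [heval, hek.neg_one_pow]
      positivity
    rw [KZ.s, Real.sign_of_pos this, hek.neg_one_pow]
  · have : (Polynomial.Chebyshev.U ℝ n).eval x < 0 := by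
      rw [heval, hok.neg_one_pow]
      have h2 : (0:ℝ) < Real.sin ((n+1)*θ - k*π) / Real.sin θ := by positivity
      have : -1 * Real.sin ((n+1)*θ - k*π) / Real.sin θ
          = -(Real.sin ((n+1)*θ - k*π) / Real.sin θ) := by ring
      rw [this]; linarith
    rw [KZ.s, Real.sign_of_neg this, hok.neg_one_pow]

lemma KZ.Ssum (N M : ℕ) (hM1 : 1 ≤ M) (hMN : M ≤ N) :
    ∑ k ∈ Finset.range N, (-1:ℝ)^k *
      (Real.cos ((k:ℝ) * ((M:ℝ) * π / N)) - Real.cos (((k:ℝ)+1) * ((M:ℝ) * π / N)))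
    = if M = N then 2*N else 0 := by
  have hN : (0:ℝ) < N := by
    have : 1 ≤ N := le_trans hM1 hMN
    exact_mod_cast Nat.lt_of_lt_of_le Nat.zero_lt_one this
  set α : ℝ := (M:ℝ) * π / N with hα
  set z : ℂ := Complex.exp (α * Complex.I) with hz
  have hzk : ∀ k : ℕ, (z ^ k).re = Real.cos (k * α) := by
    intro k
    rw [hz, ← Complex.exp_nat_mul]
    have h : (k:ℂ) * ((α:ℂ) * Complex.I) = (((k:ℝ) * α : ℝ) : ℂ) * Complex.I := by
      push_cast; ring
    rw [h, Complex.exp_ofReal_mul_I_re]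
  have hterm : ∀ k : ℕ, (-1:ℝ)^k * (Real.cos ((k:ℝ)*α) - Real.cos (((k:ℝ)+1)*α))
      = ((1 - z) * (-z)^k).re := by
    intro k
    have h1 : ((1 - z) * (-z)^k) = ((((-1:ℝ)^k : ℝ)):ℂ) * (z^k - z^(k+1)) := by
      push_cast; ring
    rw [h1, Complex.re_ofReal_mul, Complex.sub_re, hzk k, hzk (k+1)]
    push_cast
    ring
  have hsum : ∑ k ∈ Finset.range N,
      (-1:ℝ)^k * (Real.cos ((k:ℝ)*α) - Real.cos (((k:ℝ)+1)*α))
      = ((1 - z) * ∑ k ∈ Finset.range N, (-z)^k).re := by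
    rw [Finset.mul_sum, Complex.re_sum]
    exact Finset.sum_congr rfl (fun k _ => hterm k)
  rw [hsum]
  rcases eq_or_lt_of_le hMN with hEQ | hLT
  · -- M = N
    have hαπ : α = π := by rw [hα, hEQ]; field_simp
    have hzval : z = -1 := by rw [hz, hαπ]; exact_mod_cast Complex.exp_pi_mul_I
    rw [if_pos hEQ, hzval]
    simp only [neg_neg, one_pow, Finset.sum_const, Finset.card_range, nsmul_eq_mul, mul_one]
    rw [show (1 - (-1:ℂ)) = 2 by ring]
    simp
  · -- M < N
    have hαpos : 0 < α := by rw [hα]; positivity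
    have hαlt : α < π := by
      rw [hα, div_lt_iff₀ hN]
      have hMN' : (M:ℝ) < N := by exact_mod_cast hLT
      nlinarith [Real.pi_pos]
    have him : z.im = Real.sin α := by rw [hz]; exact Complex.exp_ofReal_mul_I_im α
    have hsin : 0 < Real.sin α := Real.sin_pos_of_pos_of_lt_pi hαpos hαlt
    have hz1 : z ≠ -1 := by
      intro h
      rw [h] at him
      simp at him
      linarith
    have hne : (-z) ≠ 1 := by
      intro h
      exact hz1 (by linear_combination -h)
    have hz0 : z ≠ 0 := Complex.exp_ne_zero _
    have hzp1 : z + 1 ≠ 0 := by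
      intro h
      exact hz1 (by linear_combination h)
    have hzN : z ^ N = (-1:ℂ) ^ M := by
      rw [hz, ← Complex.exp_nat_mul]
      have h : (N:ℂ) * ((α:ℂ) * Complex.I) = (M:ℂ) * ((π:ℝ) * Complex.I) := by
        have : (N:ℝ) * α = (M:ℝ) * π := by rw [hα]; field_simp
        push_cast
        calc (N:ℂ) * ((α:ℂ) * Complex.I) = (((N:ℝ) * α : ℝ):ℂ) * Complex.I := by push_cast; ring
        _ = (((M:ℝ) * π : ℝ):ℂ) * Complex.I := by rw [this]
        _ = (M:ℂ) * ((π:ℝ) * Complex.I) := by push_cast; ring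
      rw [h, Complex.exp_nat_mul, Complex.exp_pi_mul_I]
    have hnegzN : (-z) ^ N = (-1:ℂ) ^ (N + M) := by
      rw [neg_pow, hzN, pow_add]
    have hgeom : ∑ k ∈ Finset.range N, (-z)^k = ((-1:ℂ)^(N+M) - 1) / (-z - 1) := by
      rw [geom_sum_eq hne, hnegzN]
    rw [if_neg (ne_of_lt hLT), hgeom]
    rcases Nat.even_or_odd (N + M) with hev | hod
    · rw [hev.neg_one_pow]
      simp
    · rw [hod.neg_one_pow]
      have hfrac : ((-1:ℂ) - 1) / (-z - 1) = 2 / (z + 1) := by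
        rw [div_eq_div_iff (by intro h; exact hzp1 (by linear_combination -h)) hzp1]
        ring
      rw [hfrac]
      rw [show (1 - z) * (2 / (z + 1)) = (2 - 2*z)/(z+1) by ring, Complex.div_re]
      have h2 : z.re * z.re + z.im * z.im = 1 := by
        rw [← Complex.normSq_apply, ← Complex.sq_norm, hz, Complex.norm_exp_ofReal_mul_I]
        norm_num
      have hnum : (2 - 2*z).re * (z+1).re / Complex.normSq (z+1)
          + (2 - 2*z).im * (z+1).im / Complex.normSq (z+1)
          = ((2 - 2*z).re * (z+1).re + (2 - 2*z).im * (z+1).im) / Complex.normSq (z+1) := by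
        ring
      rw [hnum]
      have hzero : (2 - 2*z).re * (z+1).re + (2 - 2*z).im * (z+1).im = 0 := by
        simp only [Complex.sub_re, Complex.sub_im, Complex.mul_re, Complex.mul_im,
          Complex.add_re, Complex.add_im, Complex.one_re, Complex.one_im,
          Complex.re_ofNat, Complex.im_ofNat]
        ring_nf
        linear_combination (-2 : ℝ) * h2
      rw [hzero, zero_div]
      norm_num

lemma KZ.a_lt (n j : ℕ) (hj : j < n + 1) : KZ.a n j < KZ.a n (j + 1) := by
  have hN : (0:ℝ) < n + 1 := by positivity
  have hj' : (j:ℝ) ≤ n := by exact_mod_cast Nat.lt_succ_iff.mp hj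
  have hpi := Real.pi_pos
  have hmem1 : ((n + 1 - j : ℝ) * π / (n + 1)) ∈ Set.Icc 0 π := by
    constructor
    · have : (0:ℝ) ≤ n + 1 - j := by linarith
      positivity
    · rw [div_le_iff₀ hN]; nlinarith
  have hmem2 : ((n + 1 - (↑(j+1)) : ℝ) * π / (n + 1)) ∈ Set.Icc 0 π := by
    push_cast
    constructor
    · have : (0:ℝ) ≤ n + 1 - (j+1) := by linarith
      positivity
    · rw [div_le_iff₀ hN]; nlinarith
  have hlt : ((n + 1 - (↑(j+1)) : ℝ) * π / (n + 1)) < ((n + 1 - j : ℝ) * π / (n + 1)) := by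
    push_cast
    gcongr
    nlinarith
  exact Real.strictAntiOn_cos hmem2 hmem1 hlt

lemma KZ.piece (n m j : ℕ) (hj : j < n + 1) :
    (∫ x in (KZ.a n j)..(KZ.a n (j + 1)),
        (Polynomial.Chebyshev.U ℝ m).eval x * KZ.s n x)
    = (-1:ℝ)^(n-j) * (((Polynomial.Chebyshev.T ℝ (m+1)).eval (KZ.a n (j+1))
        - (Polynomial.Chebyshev.T ℝ (m+1)).eval (KZ.a n j)) / (m+1)) := by
  have hab : KZ.a n j < KZ.a n (j+1) := KZ.a_lt n j hj
  have h1 : (∫ x in (KZ.a n j)..(KZ.a n (j + 1)),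
        (Polynomial.Chebyshev.U ℝ m).eval x * KZ.s n x)
      = ∫ x in (KZ.a n j)..(KZ.a n (j + 1)),
        (-1:ℝ)^(n-j) * (Polynomial.Chebyshev.U ℝ m).eval x := by
    rw [intervalIntegral.integral_of_le hab.le, intervalIntegral.integral_of_le hab.le,
      MeasureTheory.integral_Ioc_eq_integral_Ioo, MeasureTheory.integral_Ioc_eq_integral_Ioo]
    refine MeasureTheory.setIntegral_congr_fun measurableSet_Ioo (fun x hx => ?_)
    rw [KZ.sign_on_piece n j hj hx]
    ring
  rw [h1, intervalIntegral.integral_const_mul]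
  congr 1
  have hm1 : ((m:ℝ) + 1) ≠ 0 := by positivity
  have hder : ∀ x ∈ Set.uIcc (KZ.a n j) (KZ.a n (j+1)),
      HasDerivAt (fun y => (Polynomial.Chebyshev.T ℝ (m+1)).eval y / ((m:ℝ)+1))
        ((Polynomial.Chebyshev.U ℝ m).eval x) x := by
    intro x _
    have h := Polynomial.hasDerivAt (Polynomial.Chebyshev.T ℝ (m+1)) x
    rw [Polynomial.Chebyshev.T_derivative_eq_U] at h
    have harg : ((m:ℤ) + 1) - 1 = (m : ℤ) := by ring
    rw [harg] at h
    have h3 := h.div_const ((m:ℝ)+1)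
    refine h3.congr_deriv ?_
    rw [Polynomial.eval_mul, Polynomial.eval_intCast]
    push_cast
    field_simp
  have := intervalIntegral.integral_eq_sub_of_hasDerivAt hder
    ((Polynomial.Chebyshev.U ℝ m).continuous_aeval.intervalIntegrable _ _)
  rw [this]
  ring

lemma KZ.a_zero (n : ℕ) : KZ.a n 0 = -1 := by
  rw [KZ.a, show ((n:ℝ) + 1 - (↑(0:ℕ))) * π / ((n:ℝ) + 1) = π by
    have hN : ((n:ℝ) + 1) ≠ 0 := by positivity
    push_cast; field_simp; ring]
  exact Real.cos_pi

lemma KZ.a_last (n : ℕ) : KZ.a n (n+1) = 1 := by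
  rw [KZ.a, show ((n:ℝ) + 1 - (↑(n+1):ℝ)) * π / ((n:ℝ) + 1) = 0 by push_cast; ring]
  exact Real.cos_zero

lemma KZ.L_U (n m : ℕ) (hm : m ≤ n) :
    (∫ x in (-1:ℝ)..1, (Polynomial.Chebyshev.U ℝ m).eval x * KZ.s n x)
      = if m = n then 2 else 0 := by
  have hsum := intervalIntegral.sum_integral_adjacent_intervals
    (a := KZ.a n) (n := n+1) (μ := MeasureTheory.volume)
    (f := fun x => (Polynomial.Chebyshev.U ℝ m).eval x * KZ.s n x)
    (fun k _ => KZ.integrable_mul_s n _ _ _)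
  rw [KZ.a_zero, KZ.a_last] at hsum
  rw [← hsum]
  set g : ℕ → ℝ := fun k => ((-1:ℝ)^k *
      (Real.cos ((k:ℝ) * (((m+1:ℕ):ℝ) * π / ((n+1:ℕ):ℝ)))
        - Real.cos (((k:ℝ)+1) * (((m+1:ℕ):ℝ) * π / ((n+1:ℕ):ℝ))))) / ((m:ℝ)+1) with hg
  have hterm : ∀ j ∈ Finset.range (n+1),
      (∫ x in (KZ.a n j)..(KZ.a n (j+1)),
        (Polynomial.Chebyshev.U ℝ m).eval x * KZ.s n x) = g (n - j) := by
    intro j hj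
    have hj' : j < n + 1 := Finset.mem_range.mp hj
    have hjn : j ≤ n := Nat.lt_succ_iff.mp hj'
    rw [KZ.piece n m j hj']
    show (-1:ℝ)^(n-j) * ((Polynomial.eval (Real.cos (((n:ℝ) + 1 - (↑(j+1):ℝ)) * π / ((n:ℝ)+1)))
        (Polynomial.Chebyshev.T ℝ (m+1))
        - Polynomial.eval (Real.cos (((n:ℝ) + 1 - (j:ℝ)) * π / ((n:ℝ)+1)))
          (Polynomial.Chebyshev.T ℝ (m+1))) / ((m:ℝ)+1)) = _
    rw [Polynomial.Chebyshev.T_real_cos, Polynomial.Chebyshev.T_real_cos]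
    rw [hg]
    have e1 : ((((m:ℤ))+1 : ℤ):ℝ) * (((n:ℝ) + 1 - (↑(j+1):ℝ)) * π / ((n:ℝ)+1))
        = (((n-j:ℕ)):ℝ) * (((m+1:ℕ):ℝ) * π / ((n+1:ℕ):ℝ)) := by
      push_cast [Nat.cast_sub hjn]
      ring
    have e2 : ((((m:ℤ))+1 : ℤ):ℝ) * (((n:ℝ) + 1 - (j:ℝ)) * π / ((n:ℝ)+1))
        = ((((n-j:ℕ)):ℝ)+1) * (((m+1:ℕ):ℝ) * π / ((n+1:ℕ):ℝ)) := by
      push_cast [Nat.cast_sub hjn]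
      ring
    rw [e1, e2]
    ring
  rw [Finset.sum_congr rfl hterm]
  have hrefl : ∑ j ∈ Finset.range (n+1), g (n - j) = ∑ j ∈ Finset.range (n+1), g j := by
    have := Finset.sum_range_reflect g (n+1)
    simpa using this
  rw [hrefl]
  have hdiv : ∑ j ∈ Finset.range (n+1), g j
      = (∑ k ∈ Finset.range (n+1), (-1:ℝ)^k *
          (Real.cos ((k:ℝ) * (((m+1:ℕ):ℝ) * π / ((n+1:ℕ):ℝ)))
            - Real.cos (((k:ℝ)+1) * (((m+1:ℕ):ℝ) * π / ((n+1:ℕ):ℝ))))) / ((m:ℝ)+1) := by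
    rw [Finset.sum_div]
  rw [hdiv, KZ.Ssum (n+1) (m+1) (by omega) (by omega)]
  by_cases hmn : m = n
  · subst hmn
    rw [if_pos rfl, if_pos rfl]
    have : ((m:ℝ)+1) ≠ 0 := by positivity
    push_cast
    field_simp
  · rw [if_neg (by omega), if_neg hmn]
    simp

lemma KZ.L_lowdeg (n : ℕ) (hn : 1 ≤ n) :
    ∀ d, ∀ P : Polynomial ℝ, P.natDegree ≤ d → d < n →
      (∫ x in (-1:ℝ)..1, P.eval x * KZ.s n x) = 0 := by
  intro d
  induction d with
  | zero =>
    intro P hP hd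
    rw [Polynomial.eq_C_of_natDegree_le_zero hP]
    have h : ∀ x : ℝ, (Polynomial.C (P.coeff 0)).eval x * KZ.s n x
        = P.coeff 0 * ((Polynomial.Chebyshev.U ℝ (0:ℕ)).eval x * KZ.s n x) := by
      intro x
      simp
    simp only [h]
    rw [intervalIntegral.integral_const_mul, KZ.L_U n 0 (by omega), if_neg (by omega), mul_zero]
  | succ d ih =>
    intro P hP hd
    by_cases hd' : P.natDegree ≤ d
    · exact ih P hd' (by omega)
    set c : ℝ := P.coeff (d+1) / 2^(d+1) with hc
    set Q : Polynomial ℝ := P - Polynomial.C c * Polynomial.Chebyshev.U ℝ (d+1 : ℕ) with hQ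
    have hUd := KZ.U_deg (d+1)
    have hQdeg : Q.natDegree ≤ d := by
      rw [Polynomial.natDegree_le_iff_coeff_eq_zero]
      intro N hN
      rw [hQ, Polynomial.coeff_sub, Polynomial.coeff_C_mul]
      rcases Nat.lt_or_ge (d+1) N with h | h
      · rw [Polynomial.coeff_eq_zero_of_natDegree_lt (by omega : P.natDegree < N),
          Polynomial.coeff_eq_zero_of_natDegree_lt (by rw [hUd.1]; omega)]
        ring
      · have hN1 : N = d + 1 := by omega
        subst hN1
        rw [hUd.2, hc]
        field_simp
        ring
    have hPQ : ∀ x : ℝ, P.eval x * KZ.s n x = Q.eval x * KZ.s n x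
        + c * ((Polynomial.Chebyshev.U ℝ (d+1:ℕ)).eval x * KZ.s n x) := by
      intro x
      rw [hQ]
      simp only [Polynomial.eval_sub, Polynomial.eval_mul, Polynomial.eval_C]
      ring
    simp only [hPQ]
    rw [intervalIntegral.integral_add (KZ.integrable_mul_s n Q _ _)
      ((KZ.integrable_mul_s n _ _ _).const_mul c)]
    rw [intervalIntegral.integral_const_mul, ih Q hQdeg (by omega),
      KZ.L_U n (d+1) (by omega), if_neg (by omega), mul_zero, add_zero]

/-- Korkine–Zolotarev: among monic polynomials of degree `n` on `[-1,1]`, the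
normalized Chebyshev polynomial of the second kind `2^{-n} Uₙ` minimizes the
`L¹` norm, and the minimum equals `2^{1-n}`. -/
theorem korkine_zolotarev
    (n : ℕ) (hn : 1 ≤ n) :
    (Polynomial.C ((1:ℝ) / 2 ^ n) * Polynomial.Chebyshev.U ℝ n).Monic ∧
    (Polynomial.C ((1:ℝ) / 2 ^ n) * Polynomial.Chebyshev.U ℝ n).natDegree = n ∧
    (∫ x in (-1:ℝ)..1,
        |(Polynomial.C ((1:ℝ) / 2 ^ n) * Polynomial.Chebyshev.U ℝ n).eval x|)
      = 2 / 2 ^ n ∧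
    ∀ P : Polynomial ℝ, P.Monic → P.natDegree = n →
      2 / 2 ^ n ≤ ∫ x in (-1:ℝ)..1, |P.eval x| := by
  have hUd := KZ.U_deg n
  set Qn : Polynomial ℝ := Polynomial.C ((1:ℝ) / 2 ^ n) * Polynomial.Chebyshev.U ℝ n with hQn
  have h2n : (2:ℝ)^n ≠ 0 := by positivity
  have hcoeff : Qn.coeff n = 1 := by
    rw [hQn, Polynomial.coeff_C_mul, hUd.2]
    field_simp
  have hdeg : Qn.natDegree = n := by
    apply Polynomial.natDegree_eq_of_le_of_coeff_ne_zero
    · refine le_trans (Polynomial.natDegree_mul_le) ?_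
      simp [hUd.1]
    · rw [hcoeff]; exact one_ne_zero
  have hmonic : Qn.Monic := by
    rw [Polynomial.Monic, Polynomial.leadingCoeff, hdeg, hcoeff]
  have habs : ∀ x : ℝ, |Qn.eval x| = Qn.eval x * KZ.s n x := by
    intro x
    rw [hQn]
    simp only [Polynomial.eval_mul, Polynomial.eval_C]
    set y : ℝ := (Polynomial.Chebyshev.U ℝ n).eval x with hy
    have hcpos : (0:ℝ) < 1 / 2^n := by positivity
    rcases lt_trichotomy y 0 with h | h | h
    · rw [KZ.s, ← hy, Real.sign_of_neg h, abs_of_neg (by nlinarith)]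
      ring
    · rw [KZ.s, ← hy, h, Real.sign_zero]
      simp
    · rw [KZ.s, ← hy, Real.sign_of_pos h, abs_of_pos (by nlinarith)]
      ring
  have hvalQ : (∫ x in (-1:ℝ)..1, Qn.eval x * KZ.s n x) = 2 / 2^n := by
    have h : ∀ x : ℝ, Qn.eval x * KZ.s n x
        = (1/2^n) * ((Polynomial.Chebyshev.U ℝ n).eval x * KZ.s n x) := by
      intro x
      rw [hQn]
      simp only [Polynomial.eval_mul, Polynomial.eval_C]
      ring
    simp only [h]
    rw [intervalIntegral.integral_const_mul, KZ.L_U n n le_rfl, if_pos rfl]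
    ring
  refine ⟨hmonic, hdeg, ?_, ?_⟩
  · rw [intervalIntegral.integral_congr (g := fun x => Qn.eval x * KZ.s n x)
      (fun x _ => habs x)]
    exact hvalQ
  · intro P hPm hPd
    have hLP : (∫ x in (-1:ℝ)..1, P.eval x * KZ.s n x) = 2 / 2^n := by
      set R : Polynomial ℝ := P - Qn with hR
      have hRdeg : R.natDegree ≤ n - 1 := by
        rw [Polynomial.natDegree_le_iff_coeff_eq_zero]
        intro N hN
        rw [hR, Polynomial.coeff_sub]
        rcases Nat.lt_or_ge n N with h | h
        · rw [Polynomial.coeff_eq_zero_of_natDegree_lt (by omega : P.natDegree < N),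
            Polynomial.coeff_eq_zero_of_natDegree_lt (by omega : Qn.natDegree < N)]
          ring
        · have hN1 : N = n := by omega
          subst hN1
          have : P.coeff N = 1 := by
            have := hPm
            rw [Polynomial.Monic, Polynomial.leadingCoeff, hPd] at this
            exact this
          rw [this, hcoeff]
          ring
      have hPR : ∀ x : ℝ, P.eval x * KZ.s n x
          = R.eval x * KZ.s n x + Qn.eval x * KZ.s n x := by
        intro x
        rw [hR]
        simp only [Polynomial.eval_sub]
        ring
      simp only [hPR]
      rw [intervalIntegral.integral_add (KZ.integrable_mul_s n R _ _)
        (KZ.integrable_mul_s n Qn _ _),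
        KZ.L_lowdeg n hn (n-1) R hRdeg (by omega), hvalQ, zero_add]
    rw [← hLP]
    apply intervalIntegral.integral_mono_on (by norm_num)
      (KZ.integrable_mul_s n P _ _)
      ((Polynomial.continuous_aeval P).abs.intervalIntegrable _ _)
    intro x _
    calc P.eval x * KZ.s n x ≤ |P.eval x * KZ.s n x| := le_abs_self _
    _ = |P.eval x| * |KZ.s n x| := abs_mul _ _
    _ ≤ |P.eval x| * 1 := mul_le_mul_of_nonneg_left (KZ.abs_sign_le _) (abs_nonneg _)
    _ = |P.eval x| := mul_one _
end
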